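/- Let A and B be symmetric positive semidefinite operators on a finite-dimensional real inner product space V, both of operator norm at most 1. Then for the standard Gaussian measure γ_1 on V and any function f : V → ℝ that is positively homogeneous of degree α ≥ 1 and L-Lipschitz on the unit ball, one has ∫ |f(√A v) − f(√B v)| dγ_1(v) ≤ L ‖√A − √B‖ ∫ |v|^α dγ_1(v). -/

import Mathlib

/-!
Write `g v = f (√A v) - f (√B v)`. It is positively homogeneous of degree `α`, so
`|g v| = ‖v‖ ^ α |g (v / ‖v‖)|` and it suffices to bound `g` on the unit sphere. There the points
`√A u` and `√B u` lie in the unit ball, because the C⋆-identity gives `‖√A‖ ^ 2 = ‖A‖ ≤ 1`; the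
Lipschitz bound then yields `|g u| ≤ L ‖√A u - √B u‖ ≤ L ‖√A - √B‖`. Integrating the pointwise
bound `|g v| ≤ L ‖√A - √B‖ ‖v‖ ^ α` against the Gaussian, whose moments are finite, gives the claim.
-/

open MeasureTheory
open scoped RealInnerProductSpace

/-- The standard Gaussian measure on `ℝ^N`. -/
noncomputable def stdGaussian (N : ℕ) : Measure (EuclideanSpace ℝ (Fin N)) :=
  volume.withDensity fun v =>
    ENNReal.ofReal (Real.exp (-‖v‖ ^ 2 / 2) / Real.sqrt ((2 * Real.pi) ^ N))

lemma IsSelfAdjoint.norm_le_one_of_norm_mul_self_le_one {E : Type*} [NonUnitalNormedRing E]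
    [StarRing E] [CStarRing E] {x : E} (hx : IsSelfAdjoint x) (h : ‖x * x‖ ≤ 1) : ‖x‖ ≤ 1 :=
  (pow_le_one_iff_of_nonneg (norm_nonneg x) two_ne_zero).mp (hx.norm_mul_self ▸ h)

section PosHomogeneous

variable {E F : Type*} [NormedAddCommGroup E] [NormedSpace ℝ E]
  [NormedAddCommGroup F] [NormedSpace ℝ F] {α : ℝ}

def IsPosHomogeneous (α : ℝ) (g : E → ℝ) : Prop :=
  ∀ t : ℝ, 0 < t → ∀ v, g (t • v) = t ^ α * g v

namespace IsPosHomogeneous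

variable {f g : E → ℝ}

lemma comp_continuousLinearMap (hg : IsPosHomogeneous α g) (S : F →L[ℝ] E) :
    IsPosHomogeneous α (g ∘ S) := fun t ht v => by
  simp only [Function.comp_apply, map_smul, hg t ht]

lemma sub (hf : IsPosHomogeneous α f) (hg : IsPosHomogeneous α g) :
    IsPosHomogeneous α (f - g) := fun t ht v => by
  simp only [Pi.sub_apply, hf t ht, hg t ht, mul_sub]

lemma map_zero (hg : IsPosHomogeneous α g) (hα : α ≠ 0) : g 0 = 0 := by
  have h := hg 2 two_pos 0
  rw [smul_zero] at h
  have h2 : (2 : ℝ) ^ α ≠ 1 := fun h1 =>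
    hα ((Real.rpow_right_inj two_pos (by norm_num)).mp (h1.trans (Real.rpow_zero 2).symm))
  by_contra hg0
  exact h2 ((mul_eq_right₀ hg0).mp h.symm)

lemma abs_le_mul_norm_rpow (hg : IsPosHomogeneous α g) (hα : α ≠ 0) {C : ℝ}
    (hC : ∀ u : E, ‖u‖ = 1 → |g u| ≤ C) (v : E) : |g v| ≤ C * ‖v‖ ^ α := by
  rcases eq_or_ne v 0 with rfl | hv
  · rw [hg.map_zero hα, abs_zero, norm_zero, Real.zero_rpow hα, mul_zero]
  have hnorm : 0 < ‖v‖ := norm_pos_iff.mpr hv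
  have hunit : ‖‖v‖⁻¹ • v‖ = 1 := norm_smul_inv_norm hv
  calc |g v| = |g (‖v‖ • ‖v‖⁻¹ • v)| := by rw [smul_inv_smul₀ hnorm.ne']
    _ = ‖v‖ ^ α * |g (‖v‖⁻¹ • v)| := by
      rw [hg _ hnorm, abs_mul, abs_of_nonneg (Real.rpow_nonneg hnorm.le α)]
    _ ≤ ‖v‖ ^ α * C := by gcongr; exact hC _ hunit
    _ = C * ‖v‖ ^ α := mul_comm _ _

end IsPosHomogeneous

end PosHomogeneous

lemma nonneg_of_lipschitz_unitBall {F : Type*} [SeminormedAddCommGroup F] {f : F → ℝ} {L : ℝ}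
    (hlip : ∀ x y : F, ‖x‖ ≤ 1 → ‖y‖ ≤ 1 → |f x - f y| ≤ L * ‖x - y‖) {u : F} (hu : ‖u‖ = 1) :
    0 ≤ L := by
  have h := hlip u 0 hu.le (by simp)
  rw [sub_zero, hu, mul_one] at h
  exact (abs_nonneg _).trans h

lemma abs_sub_comp_le_of_lipschitz_unitBall {E F : Type*} [NormedAddCommGroup E]
    [NormedSpace ℝ E] [NormedAddCommGroup F] [NormedSpace ℝ F] {f : F → ℝ} {L : ℝ}
    (hlip : ∀ x y : F, ‖x‖ ≤ 1 → ‖y‖ ≤ 1 → |f x - f y| ≤ L * ‖x - y‖) (hL : 0 ≤ L)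
    {S T : E →L[ℝ] F} (hS : ‖S‖ ≤ 1) (hT : ‖T‖ ≤ 1) {u : E} (hu : ‖u‖ ≤ 1) :
    |f (S u) - f (T u)| ≤ L * ‖S - T‖ := by
  have hSu : ‖S u‖ ≤ 1 := (S.le_of_opNorm_le hS u).trans (by simpa using hu)
  have hTu : ‖T u‖ ≤ 1 := (T.le_of_opNorm_le hT u).trans (by simpa using hu)
  have hdiff : ‖S u - T u‖ ≤ ‖S - T‖ :=
    ((S - T).le_opNorm u).trans (mul_le_of_le_one_right (norm_nonneg _) hu)
  exact (hlip _ _ hSu hTu).trans (mul_le_mul_of_nonneg_left hdiff hL)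

lemma Real.rpow_le_exp_mul_exp_mul_sq {x α b : ℝ} (hx : 0 ≤ x) (hα : 0 ≤ α) (hb : 0 < b) :
    x ^ α ≤ exp (α ^ 2 / (4 * b)) * exp (b * x ^ 2) := by
  have hamgm : x * α ≤ α ^ 2 / (4 * b) + b * x ^ 2 := by
    rw [div_add' _ _ _ (by positivity), le_div_iff₀ (by positivity)]
    nlinarith [sq_nonneg (α - 2 * b * x)]
  calc x ^ α ≤ exp x ^ α := rpow_le_rpow hx ((le_add_of_nonneg_right zero_le_one).trans
        (add_one_le_exp x)) hα
    _ = exp (x * α) := (exp_mul x α).symm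
    _ ≤ exp (α ^ 2 / (4 * b)) * exp (b * x ^ 2) := by
      rw [← exp_add]; exact exp_le_exp.mpr hamgm

section Gaussian

open Real

variable {V : Type*} [NormedAddCommGroup V] [InnerProductSpace ℝ V] [FiniteDimensional ℝ V]
  [MeasurableSpace V] [BorelSpace V] {b : ℝ}

lemma integrable_exp_neg_mul_sq_norm (hb : 0 < b) :
    Integrable (fun v : V => exp (-b * ‖v‖ ^ 2)) := by
  have h := (GaussianFourier.integrable_cexp_neg_mul_sq_norm_add (V := V) (b := b)
    (by simpa using hb) 0 0).norm
  refine h.congr (ae_of_all _ fun v => ?_)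
  simp only [zero_mul, add_zero, Complex.norm_exp]
  norm_cast

lemma integrable_norm_rpow_mul_exp_neg_mul_sq_norm {α : ℝ} (hα : 0 ≤ α) (hb : 0 < b) :
    Integrable (fun v : V => ‖v‖ ^ α * exp (-b * ‖v‖ ^ 2)) := by
  refine ((integrable_exp_neg_mul_sq_norm (half_pos hb)).const_mul
    (exp (α ^ 2 / (4 * (b / 2))))).mono' (by fun_prop) (ae_of_all _ fun v => ?_)
  rw [norm_of_nonneg (by positivity)]
  calc ‖v‖ ^ α * exp (-b * ‖v‖ ^ 2)
      ≤ exp (α ^ 2 / (4 * (b / 2))) * exp (b / 2 * ‖v‖ ^ 2) * exp (-b * ‖v‖ ^ 2) := by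
        gcongr; exact rpow_le_exp_mul_exp_mul_sq (norm_nonneg v) hα (half_pos hb)
    _ = exp (α ^ 2 / (4 * (b / 2))) * exp (-(b / 2) * ‖v‖ ^ 2) := by
        rw [mul_assoc, ← exp_add]; ring_nf

end Gaussian

lemma integrable_norm_rpow_stdGaussian (N : ℕ) {α : ℝ} (hα : 0 ≤ α) :
    Integrable (fun v => ‖v‖ ^ α) (stdGaussian N) := by
  rw [stdGaussian, integrable_withDensity_iff_integrable_smul' (by fun_prop)
    (ae_of_all _ fun _ => ENNReal.ofReal_lt_top)]
  refine ((integrable_norm_rpow_mul_exp_neg_mul_sq_norm hα one_half_pos).div_const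
    (Real.sqrt ((2 * Real.pi) ^ N))).congr (ae_of_all _ fun v => ?_)
  simp only [ENNReal.toReal_ofReal (by positivity :
    0 ≤ Real.exp (-‖v‖ ^ 2 / 2) / Real.sqrt ((2 * Real.pi) ^ N)), smul_eq_mul]
  ring_nf

theorem gaussian_sqrt_lipschitz_bound_general (N : ℕ) (α L : ℝ) (hα : 1 ≤ α)
    (f : EuclideanSpace ℝ (Fin N) → ℝ)
    (hhom : ∀ t : ℝ, 0 < t → ∀ v, f (t • v) = t ^ α * f v)
    (hlip : ∀ x y : EuclideanSpace ℝ (Fin N), ‖x‖ ≤ 1 → ‖y‖ ≤ 1 →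
      |f x - f y| ≤ L * ‖x - y‖)
    (A B sA sB : EuclideanSpace ℝ (Fin N) →L[ℝ] EuclideanSpace ℝ (Fin N))
    (hsAsa : IsSelfAdjoint sA) (hsBsa : IsSelfAdjoint sB)
    (hsqA : sA ∘L sA = A) (hsqB : sB ∘L sB = B)
    (hA : ‖A‖ ≤ 1) (hB : ‖B‖ ≤ 1) :
    (∫ v, |f (sA v) - f (sB v)| ∂(stdGaussian N))
      ≤ L * ‖sA - sB‖ * ∫ v, ‖v‖ ^ α ∂(stdGaussian N) := by
  have hsA : ‖sA‖ ≤ 1 := hsAsa.norm_le_one_of_norm_mul_self_le_one (by rwa [← hsqA] at hA)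
  have hsB : ‖sB‖ ≤ 1 := hsBsa.norm_le_one_of_norm_mul_self_le_one (by rwa [← hsqB] at hB)
  have hpointwise (v : EuclideanSpace ℝ (Fin N)) :
      |f (sA v) - f (sB v)| ≤ L * ‖sA - sB‖ * ‖v‖ ^ α :=
    ((IsPosHomogeneous.comp_continuousLinearMap hhom sA).sub
      (IsPosHomogeneous.comp_continuousLinearMap hhom sB)).abs_le_mul_norm_rpow (by linarith)
      (fun u hu => abs_sub_comp_le_of_lipschitz_unitBall hlip
        (nonneg_of_lipschitz_unitBall hlip hu) hsA hsB hu.le) v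
  calc (∫ v, |f (sA v) - f (sB v)| ∂(stdGaussian N))
      ≤ ∫ v, L * ‖sA - sB‖ * ‖v‖ ^ α ∂(stdGaussian N) :=
        integral_mono_of_nonneg (ae_of_all _ fun v => abs_nonneg _)
          ((integrable_norm_rpow_stdGaussian N (by linarith)).const_mul _) (ae_of_all _ hpointwise)
    _ = L * ‖sA - sB‖ * ∫ v, ‖v‖ ^ α ∂(stdGaussian N) := integral_const_mul _ _

/-- For symmetric positive semidefinite `A, B` of operator norm at most `1` (with square
roots `sA, sB`), and `f` positively homogeneous of degree `α ≥ 1` and `L`-Lipschitz on the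
unit ball, `∫ |f(√A v) - f(√B v)| dγ₁(v) ≤ L ‖√A - √B‖ ∫ ‖v‖^α dγ₁(v)`. -/
theorem gaussian_sqrt_lipschitz_bound (N : ℕ) (α L : ℝ) (hα : 1 ≤ α)
    (f : EuclideanSpace ℝ (Fin N) → ℝ)
    (hhom : ∀ t : ℝ, 0 < t → ∀ v, f (t • v) = t ^ α * f v)
    (hlip : ∀ x y : EuclideanSpace ℝ (Fin N), ‖x‖ ≤ 1 → ‖y‖ ≤ 1 →
      |f x - f y| ≤ L * ‖x - y‖)
    (A B sA sB : EuclideanSpace ℝ (Fin N) →L[ℝ] EuclideanSpace ℝ (Fin N))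
    (hAsa : IsSelfAdjoint A) (hBsa : IsSelfAdjoint B)
    (hsAsa : IsSelfAdjoint sA) (hsBsa : IsSelfAdjoint sB)
    (hsApos : ∀ v, 0 ≤ ⟪sA v, v⟫) (hsBpos : ∀ v, 0 ≤ ⟪sB v, v⟫)
    (hsqA : sA ∘L sA = A) (hsqB : sB ∘L sB = B)
    (hA : ‖A‖ ≤ 1) (hB : ‖B‖ ≤ 1) :
    (∫ v, |f (sA v) - f (sB v)| ∂(stdGaussian N))
      ≤ L * ‖sA - sB‖ * ∫ v, ‖v‖ ^ α ∂(stdGaussian N) :=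
  gaussian_sqrt_lipschitz_bound_general N α L hα f hhom hlip A B sA sB hsAsa hsBsa hsqA hsqB hA hB
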